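/- arXiv:2601.14619 — 2 statements merged into one kernel-verified Lean document; each statement's English description precedes it below -/
import Mathlib

section
/- Let G = (V,E) be a finite simple graph, let k be a natural number, and let c : V → T be a proper coloring of G (i.e., c(u) ≠ c(v) whenever u and v are adjacent). If S ⊆ V is such that G[S] is a k-defective clique, then the sum over all colors t of C(|S ∩ c⁻¹(t)|, 2) is at most k. (This is the validity of the coloring-based upper bound used in ComputeUB: missing edges within each color class are pairwise disjoint non-edges of G[S].) -/
open Finset

/-- Number of edges of the subgraph of `G` induced by the vertex set `S`. -/
def edgesIn {V : Type*} (G : SimpleGraph V) [DecidableRel G.Adj] (S : Finset V) : ℕ :=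
  ((S ×ˢ S).filter fun p => G.Adj p.1 p.2).card / 2

/-- Degree of `u` within `S`: the number of neighbors of `u` lying in `S`. -/
def degIn {V : Type*} (G : SimpleGraph V) [DecidableRel G.Adj] (S : Finset V) (u : V) : ℕ :=
  (S.filter fun v => G.Adj u v).card

/-- `G[S]` is an edge-based γ-quasi-clique: `e(S) ≥ γ * C(|S|, 2)`. -/
def IsEQC {V : Type*} (G : SimpleGraph V) [DecidableRel G.Adj] (γ : ℝ) (S : Finset V) : Prop :=
  γ * ((S.card.choose 2 : ℕ) : ℝ) ≤ (edgesIn G S : ℝ)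

/-- `G[S]` is a k-defective clique: `e(S) ≥ C(|S|, 2) - k`. -/
def IsDefective {V : Type*} (G : SimpleGraph V) [DecidableRel G.Adj] (k : ℕ) (S : Finset V) : Prop :=
  S.card.choose 2 ≤ edgesIn G S + k

/-- `get-k(s) = ⌊(1 - γ) * C(s, 2)⌋`. -/
noncomputable def getK (γ : ℝ) (s : ℕ) : ℕ :=
  (⌊(1 - γ) * ((s.choose 2 : ℕ) : ℝ)⌋).toNat

/-- `solve-defect(k)`: the maximum size of a k-defective clique in `G`. -/
noncomputable def solveDefect {V : Type*} (G : SimpleGraph V) [DecidableRel G.Adj] (k : ℕ) : ℕ :=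
  sSup {n | ∃ S : Finset V, IsDefective G k S ∧ S.card = n}

/-- `s*`: the maximum size of an edge-based γ-quasi-clique in `G`. -/
noncomputable def sStar {V : Type*} (G : SimpleGraph V) [DecidableRel G.Adj] (γ : ℝ) : ℕ :=
  sSup {n | ∃ S : Finset V, IsEQC G γ S ∧ S.card = n}

lemma two_mul_choose_two (n : ℕ) : 2 * n.choose 2 = n * (n - 1) := by
  induction n with
  | zero => rfl
  | succ m ih =>
    rw [Nat.choose_succ_succ, Nat.choose_one_right, Nat.mul_add, ih]
    cases m <;> simp <;> ring

theorem coloring_upper_bound_valid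
    {V : Type*} {T : Type*} [Fintype V] [DecidableEq V] [Fintype T] [DecidableEq T]
    (G : SimpleGraph V) [DecidableRel G.Adj] (k : ℕ)
    (c : V → T) (hc : ∀ u v : V, G.Adj u v → c u ≠ c v)
    (S : Finset V) (hdef : IsDefective G k S) :
    ∑ t : T, ((S.filter fun v => c v = t).card.choose 2) ≤ k := by
  classical
  set A := (S ×ˢ S).filter fun p => G.Adj p.1 p.2 with hA
  have hAsub : A ⊆ S.offDiag := by
    intro p hp
    simp only [hA, Finset.mem_filter, Finset.mem_product] at hp
    exact Finset.mem_offDiag.mpr ⟨hp.1.1, hp.1.2, hp.2.ne⟩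
  set D : T → Finset (V × V) := fun t => (S.filter fun v => c v = t).offDiag with hD
  have hDsub : ∀ t, D t ⊆ S.offDiag \ A := by
    intro t p hp
    rw [hD, Finset.mem_offDiag] at hp
    obtain ⟨⟨h1, hc1⟩, ⟨h2, hc2⟩, hne⟩ := by
      simpa [Finset.mem_filter] using hp
    rw [Finset.mem_sdiff]
    refine ⟨Finset.mem_offDiag.mpr ⟨h1, h2, hne⟩, ?_⟩
    simp only [hA, Finset.mem_filter, Finset.mem_product, not_and]
    intro _ hadj
    exact hc _ _ hadj (hc1.trans hc2.symm)
  have hdisj : ∀ t ∈ (Finset.univ : Finset T), ∀ t' ∈ (Finset.univ : Finset T),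
      t ≠ t' → Disjoint (D t) (D t') := by
    intro t _ t' _ htt
    rw [Finset.disjoint_left]
    intro p hp hp'
    rw [hD, Finset.mem_offDiag] at hp hp'
    have h1 := hp.1
    have h2 := hp'.1
    simp only [Finset.mem_filter] at h1 h2
    exact htt (h1.2.symm.trans h2.2)
  have hunion : (Finset.univ.biUnion D) ⊆ S.offDiag \ A :=
    Finset.biUnion_subset.mpr fun t _ => hDsub t
  have hsum : ∑ t : T, (D t).card ≤ (S.offDiag \ A).card := by
    rw [← Finset.card_biUnion hdisj]
    exact Finset.card_le_card hunion
  have hsd : (S.offDiag \ A).card = S.offDiag.card - A.card :=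
    Finset.card_sdiff_of_subset hAsub
  have hAcard : A.card ≤ S.offDiag.card := Finset.card_le_card hAsub
  have hoff : S.offDiag.card = S.card * (S.card - 1) := by
    rw [Finset.offDiag_card]
    cases hS : S.card <;> simp [Nat.succ_sub_one, Nat.succ_mul, Nat.mul_succ] <;> omega
  have hDcard : ∀ t, (D t).card = (S.filter fun v => c v = t).card *
      ((S.filter fun v => c v = t).card - 1) := by
    intro t
    rw [hD, Finset.offDiag_card]
    cases hS : (S.filter fun v => c v = t).card <;>
      simp [Nat.succ_sub_one, Nat.succ_mul, Nat.mul_succ] <;> omega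
  have hedg : 2 * edgesIn G S ≤ A.card := by
    rw [edgesIn, ← hA]
    omega
  have hdef' : S.card * (S.card - 1) ≤ 2 * edgesIn G S + 2 * k := by
    rw [← two_mul_choose_two]
    rw [IsDefective] at hdef
    omega
  have key : ∑ t : T, (D t).card ≤ 2 * k := by
    calc ∑ t : T, (D t).card ≤ (S.offDiag \ A).card := hsum
      _ = S.offDiag.card - A.card := hsd
      _ ≤ 2 * k := by rw [hoff] at *; omega
  have : ∑ t : T, 2 * ((S.filter fun v => c v = t).card.choose 2) ≤ 2 * k := by
    calc ∑ t : T, 2 * ((S.filter fun v => c v = t).card.choose 2)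
        = ∑ t : T, (D t).card := by
          refine Finset.sum_congr rfl fun t _ => ?_
          rw [two_mul_choose_two, hDcard]
      _ ≤ 2 * k := key
  rw [← Finset.mul_sum] at this
  omega
end

section
/- Let G = (V,E) be a finite simple graph and let γ be a real number with 0 < γ < 1. Define f(s) = solve-defect(get-k(s)) and the sequence s₀, s₁, s₂, … by sᵢ₊₁ = f(sᵢ), starting from any s₀ ≥ s*. Then every term satisfies sᵢ ≥ s*, the sequence is non-increasing and strictly decreasing until it reaches s*, and there exists an index i ≤ s₀ − s* with sᵢ = s*; in particular the top-down iterative framework EQC-TD terminates in finitely many steps and returns s*. -/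
open Finset

section Aux
variable {V : Type*} [Fintype V] (G : SimpleGraph V) [DecidableRel G.Adj]

lemma bddEQC (γ : ℝ) : BddAbove {n | ∃ S : Finset V, IsEQC G γ S ∧ S.card = n} := by
  refine ⟨Fintype.card V, ?_⟩
  rintro n ⟨S, _, rfl⟩
  exact S.card_le_univ.trans_eq Finset.card_univ

lemma bddDef (k : ℕ) : BddAbove {n | ∃ S : Finset V, IsDefective G k S ∧ S.card = n} := by
  refine ⟨Fintype.card V, ?_⟩
  rintro n ⟨S, _, rfl⟩
  exact S.card_le_univ.trans_eq Finset.card_univ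

lemma exists_sStar (γ : ℝ) : ∃ S : Finset V, IsEQC G γ S ∧ S.card = sStar G γ :=
  Nat.sSup_mem (s := {n | ∃ S : Finset V, IsEQC G γ S ∧ S.card = n})
    ⟨0, ∅, by simp [IsEQC, edgesIn], by simp⟩ (bddEQC G γ)

lemma exists_solveDefect (k : ℕ) :
    ∃ S : Finset V, IsDefective G k S ∧ S.card = solveDefect G k :=
  Nat.sSup_mem (s := {n | ∃ S : Finset V, IsDefective G k S ∧ S.card = n})
    ⟨0, ∅, by simp [IsDefective], by simp⟩ (bddDef G k)

lemma le_sStar {γ : ℝ} {S : Finset V} (h : IsEQC G γ S) : S.card ≤ sStar G γ :=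
  le_csSup (bddEQC G γ) ⟨S, h, rfl⟩

lemma le_solveDefect {k : ℕ} {S : Finset V} (h : IsDefective G k S) : S.card ≤ solveDefect G k :=
  le_csSup (bddDef G k) ⟨S, h, rfl⟩

lemma getK_nonneg (γ : ℝ) (hγ1 : γ < 1) (s : ℕ) : (0:ℝ) ≤ (1 - γ) * ((s.choose 2 : ℕ) : ℝ) :=
  mul_nonneg (by linarith) (Nat.cast_nonneg _)

lemma getK_int (γ : ℝ) (hγ1 : γ < 1) (s : ℕ) :
    ((getK γ s : ℕ) : ℤ) = ⌊(1 - γ) * ((s.choose 2 : ℕ) : ℝ)⌋ := by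
  rw [getK]
  exact Int.toNat_of_nonneg (Int.floor_nonneg.2 (getK_nonneg γ hγ1 s))

lemma getK_le (γ : ℝ) (hγ1 : γ < 1) (s : ℕ) : (getK γ s : ℝ) ≤ (1 - γ) * (s.choose 2 : ℕ) := by
  calc (getK γ s : ℝ) = ((((getK γ s : ℕ) : ℤ)) : ℝ) := by push_cast; ring
    _ = ((⌊(1 - γ) * ((s.choose 2 : ℕ) : ℝ)⌋ : ℤ) : ℝ) := by rw [getK_int γ hγ1 s]
    _ ≤ _ := Int.floor_le _

lemma key1 {γ : ℝ} (hγ1 : γ < 1) {s : ℕ} (hs : sStar G γ ≤ s) :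
    sStar G γ ≤ solveDefect G (getK γ s) := by
  obtain ⟨S, hS, hcard⟩ := exists_sStar G γ
  refine hcard ▸ le_solveDefect G ?_
  rw [IsDefective]
  have hle : (S.card.choose 2 : ℤ) ≤ (edgesIn G S : ℤ) + (getK γ s : ℤ) := by
    have hfloor : ((S.card.choose 2 : ℤ) - (edgesIn G S : ℤ)) ≤ ⌊(1 - γ) * ((s.choose 2 : ℕ) : ℝ)⌋ := by
      rw [Int.le_floor]
      have hc : ((S.card.choose 2 : ℕ) : ℝ) ≤ ((s.choose 2 : ℕ) : ℝ) := by
        exact_mod_cast Nat.choose_le_choose 2 (hcard ▸ hs)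
      have := hS
      rw [IsEQC] at this
      push_cast
      nlinarith [this, hc]
    have hk := getK_int γ hγ1 s
    omega
  exact_mod_cast hle

lemma key2core {γ : ℝ} (hγ1 : γ < 1) {s : ℕ} {T : Finset V}
    (hT : IsDefective G (getK γ s) T) (hs : s ≤ T.card) : IsEQC G γ T := by
  rw [IsDefective] at hT
  rw [IsEQC]
  have h1 : ((T.card.choose 2 : ℕ) : ℝ) ≤ (edgesIn G T : ℝ) + (getK γ s : ℝ) := by
    exact_mod_cast hT
  have h2 := getK_le γ hγ1 s
  have h3 : ((s.choose 2 : ℕ) : ℝ) ≤ ((T.card.choose 2 : ℕ) : ℝ) := by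
    exact_mod_cast Nat.choose_le_choose 2 hs
  nlinarith

lemma key2 {γ : ℝ} (hγ1 : γ < 1) {s : ℕ} (hs : sStar G γ ≤ s) :
    solveDefect G (getK γ s) ≤ s := by
  by_contra h
  push_neg at h
  obtain ⟨T, hT, hcard⟩ := exists_solveDefect G (getK γ s)
  have : T.card ≤ sStar G γ := le_sStar G (key2core G hγ1 hT (by omega))
  omega

lemma key3 {γ : ℝ} (hγ1 : γ < 1) {s : ℕ} (hs : sStar G γ < s) :
    solveDefect G (getK γ s) < s := by
  by_contra h
  push_neg at h
  obtain ⟨T, hT, hcard⟩ := exists_solveDefect G (getK γ s)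
  have : T.card ≤ sStar G γ := le_sStar G (key2core G hγ1 hT (by omega))
  omega

end Aux


theorem top_down_terminates
    {V : Type*} [Fintype V] [DecidableEq V] [Nonempty V]
    (G : SimpleGraph V) [DecidableRel G.Adj]
    (γ : ℝ) (hγ0 : 0 < γ) (hγ1 : γ < 1)
    (seq : ℕ → ℕ) (h0 : sStar G γ ≤ seq 0)
    (hstep : ∀ i : ℕ, seq (i + 1) = solveDefect G (getK γ (seq i))) :
    (∀ i : ℕ, sStar G γ ≤ seq i) ∧
    (∀ i : ℕ, seq (i + 1) ≤ seq i) ∧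
    (∀ i : ℕ, sStar G γ < seq i → seq (i + 1) < seq i) ∧
    (∃ i ≤ seq 0 - sStar G γ, seq i = sStar G γ) := by
  have hlow : ∀ i, sStar G γ ≤ seq i := by
    intro i
    induction i with
    | zero => exact h0
    | succ n ih => rw [hstep n]; exact key1 G hγ1 ih
  have hmono : ∀ i, seq (i + 1) ≤ seq i := fun i => (hstep i) ▸ key2 G hγ1 (hlow i)
  have hstrict : ∀ i, sStar G γ < seq i → seq (i + 1) < seq i :=
    fun i h => (hstep i) ▸ key3 G hγ1 h
  refine ⟨hlow, hmono, hstrict, ?_⟩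
  have claim : ∀ i, seq i = sStar G γ ∨ seq i + i ≤ seq 0 := by
    intro i
    induction i with
    | zero => right; omega
    | succ n ih =>
      rcases eq_or_lt_of_le (hlow n) with heq | hlt
      · left
        have := hmono n
        have := hlow (n + 1)
        omega
      · rcases ih with h | h
        · omega
        · right
          have := hstrict n hlt
          omega
  refine ⟨seq 0 - sStar G γ, le_refl _, ?_⟩
  rcases claim (seq 0 - sStar G γ) with h | h
  · exact h
  · have := hlow (seq 0 - sStar G γ)
    omega
end
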